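/- arXiv:2504.20768 — 3 statements merged into one kernel-verified Lean document; each statement's English description precedes it below -/
import Mathlib

section
/- Let r be an acyclic relation on a type α (i.e., its transitive closure Relation.TransGen r is irreflexive) and let a, b : α. Then the relation r' obtained from r by adding the single edge (a, b) (r' x y ↔ r x y ∨ (x = a ∧ y = b)) is acyclic if and only if a ≠ b and there is no r-path from b to a (¬ Relation.TransGen r b a). -/
/-- Adding an edge `(a, b)` to an acyclic relation `r` keeps it acyclic
iff `a ≠ b` and there is no `r`-path from `b` to `a`. -/
theorem addEdge_acyclic_iff {α : Type*} (r : α → α → Prop) (a b : α)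
    (hr : Irreflexive (Relation.TransGen r)) :
    Irreflexive (Relation.TransGen (fun x y => r x y ∨ (x = a ∧ y = b))) ↔
      (a ≠ b ∧ ¬ Relation.TransGen r b a) := by
  constructor
  · intro h
    constructor
    · rintro rfl
      exact h a (Relation.TransGen.single (Or.inr ⟨rfl, rfl⟩))
    · intro hba
      have h1 : Relation.TransGen (fun x y => r x y ∨ (x = a ∧ y = b)) a b :=
        Relation.TransGen.single (Or.inr ⟨rfl, rfl⟩)
      have h2 : Relation.TransGen (fun x y => r x y ∨ (x = a ∧ y = b)) b a :=
        Relation.TransGen.mono (fun _ _ h => Or.inl h) _ _ hba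
      exact h a (h1.trans h2)
  · rintro ⟨hab, hba⟩ x hx
    have key : ∀ u v, Relation.TransGen (fun x y => r x y ∨ (x = a ∧ y = b)) u v →
        Relation.TransGen r u v ∨
          (Relation.ReflTransGen r u a ∧ Relation.ReflTransGen r b v) := by
      intro u v huv
      induction huv with
      | single h =>
        rcases h with h | ⟨rfl, rfl⟩
        · exact Or.inl (Relation.TransGen.single h)
        · exact Or.inr ⟨Relation.ReflTransGen.refl, Relation.ReflTransGen.refl⟩
      | tail _ h ih =>
        rcases h with h | ⟨rfl, rfl⟩
        · rcases ih with ih | ⟨h1, h2⟩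
          · exact Or.inl (ih.tail h)
          · exact Or.inr ⟨h1, h2.tail h⟩
        · rcases ih with ih | ⟨h1, h2⟩
          · exact Or.inr ⟨ih.to_reflTransGen, Relation.ReflTransGen.refl⟩
          · exfalso
            rcases h2.cases_head with rfl | ⟨c, hc, hca⟩
            · exact hab rfl
            · exact hba (Relation.TransGen.head' hc hca)
    rcases key x x hx with h | ⟨h1, h2⟩
    · exact hr x h
    · have hba' : Relation.ReflTransGen r b a := h2.trans h1
      rcases hba'.cases_head with rfl | ⟨c, hc, hca⟩
      · exact hab rfl
      · exact hba (Relation.TransGen.head' hc hca)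
end

section
/- Let r be an acyclic relation on a type α (i.e., Relation.TransGen r is irreflexive) and let a, b : α with a ≠ b. Then at least one of the two relations obtained from r by adding the edge (a, b) or by adding the edge (b, a) is acyclic. -/
open Relation

private lemma addEdge_decomp {α : Type*} (r : α → α → Prop) (a b : α) {x y : α}
    (h : Relation.TransGen (fun x y => r x y ∨ (x = a ∧ y = b)) x y) :
    Relation.TransGen r x y ∨ (Relation.ReflTransGen r x a ∧ Relation.ReflTransGen r b y) := by
  induction h with
  | single h =>
    rcases h with h | ⟨rfl, rfl⟩
    · exact Or.inl (TransGen.single h)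
    · exact Or.inr ⟨ReflTransGen.refl, ReflTransGen.refl⟩
  | tail _ h ih =>
    rcases h with h | ⟨rfl, rfl⟩
    · rcases ih with ih | ⟨h1, h2⟩
      · exact Or.inl (ih.tail h)
      · exact Or.inr ⟨h1, h2.tail h⟩
    · rcases ih with ih | ⟨h1, _⟩
      · exact Or.inr ⟨ih.to_reflTransGen, ReflTransGen.refl⟩
      · exact Or.inr ⟨h1, ReflTransGen.refl⟩

private lemma addEdge_cycle {α : Type*} (r : α → α → Prop) (a b : α)
    (hr : Irreflexive (Relation.TransGen r)) (hab : a ≠ b)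
    (h : ¬ Irreflexive (Relation.TransGen (fun x y => r x y ∨ (x = a ∧ y = b)))) :
    Relation.TransGen r b a := by
  simp only [Irreflexive, not_forall, not_not] at h
  obtain ⟨x, hx⟩ := h
  rcases addEdge_decomp r a b hx with hx | ⟨h1, h2⟩
  · exact absurd hx (hr x)
  · rcases (h2.trans h1).cases_head with rfl | ⟨c, hc, hc'⟩
    · exact absurd rfl hab.symm
    · exact TransGen.head' hc hc'

/-- For an acyclic relation `r` and distinct `a b`, at least one orientation of
the new edge between `a` and `b` keeps the relation acyclic. -/
theorem addEdge_some_orientation_acyclic {α : Type*} (r : α → α → Prop) (a b : α)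
    (hr : Irreflexive (Relation.TransGen r)) (hab : a ≠ b) :
    Irreflexive (Relation.TransGen (fun x y => r x y ∨ (x = a ∧ y = b))) ∨
      Irreflexive (Relation.TransGen (fun x y => r x y ∨ (x = b ∧ y = a))) := by
  by_contra h
  push_neg at h
  have h1 := addEdge_cycle r a b hr hab h.1
  have h2 := addEdge_cycle r b a hr hab.symm h.2
  exact hr a (h2.trans h1)
end

section
/- Let α be a type and r : ℕ → (α → α → Prop) a sequence of relations such that r 0 is acyclic (Relation.TransGen (r 0) is irreflexive) and, for every i, one of the following holds: (1) there exist a b with a ≠ b and ¬ Relation.TransGen (r i) b a such that r (i+1) x y ↔ r i x y ∨ (x = a ∧ y = b); (2) there exist a b with Relation.TransGen (r i) b a such that r (i+1) x y ↔ r i x y ∨ (x = b ∧ y = a); or (3) r (i+1) is a subrelation of r i (∀ x y, r (i+1) x y → r i x y). Then r i is acyclic for every i. -/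
open Relation

private lemma add_edge_acyclic {α : Type*} {r r' : α → α → Prop} {a b : α}
    (hirr : Irreflexive (TransGen r)) (hne : a ≠ b) (hna : ¬ TransGen r b a)
    (hiff : ∀ x y, r' x y ↔ r x y ∨ (x = a ∧ y = b)) :
    Irreflexive (TransGen r') := by
  have key : ∀ x y, TransGen r' x y →
      TransGen r x y ∨ (ReflTransGen r x a ∧ ReflTransGen r b y) := by
    intro x y h
    induction h with
    | single h =>
      rcases (hiff _ _).1 h with h | ⟨rfl, rfl⟩
      · exact Or.inl (TransGen.single h)
      · exact Or.inr ⟨ReflTransGen.refl, ReflTransGen.refl⟩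
    | tail _ h ih =>
      rcases (hiff _ _).1 h with h | ⟨rfl, rfl⟩
      · rcases ih with ih | ⟨h1, h2⟩
        · exact Or.inl (ih.tail h)
        · exact Or.inr ⟨h1, h2.tail h⟩
      · rcases ih with ih | ⟨_, h2⟩
        · exact Or.inr ⟨ih.to_reflTransGen, ReflTransGen.refl⟩
        · rcases h2.cases_head with rfl | ⟨c, hc, hc'⟩
          · exact absurd rfl hne
          · exact absurd (TransGen.head' hc hc') hna
  intro x hx
  rcases key x x hx with h | ⟨h1, h2⟩
  · exact hirr x h
  · rcases (h2.trans h1).cases_head with rfl | ⟨c, hc, hc'⟩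
    · exact hne rfl
    · exact hna (TransGen.head' hc hc')


/-- The LV[CT] protocol preserves acyclicity of the dependency DAG: starting
from an acyclic relation and at each step either adding a non-cycle-closing
edge, performing a marker shift (adding the reversed edge of a cycle-closing
one), or removing edges, every relation in the sequence is acyclic. -/
theorem protocol_preserves_acyclicity {α : Type*} (r : ℕ → α → α → Prop)
    (h0 : Irreflexive (Relation.TransGen (r 0)))
    (hstep : ∀ i,
      (∃ a b, a ≠ b ∧ ¬ Relation.TransGen (r i) b a ∧
        ∀ x y, r (i + 1) x y ↔ r i x y ∨ (x = a ∧ y = b)) ∨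
      (∃ a b, Relation.TransGen (r i) b a ∧
        ∀ x y, r (i + 1) x y ↔ r i x y ∨ (x = b ∧ y = a)) ∨
      (∀ x y, r (i + 1) x y → r i x y)) :
    ∀ i, Irreflexive (Relation.TransGen (r i)) := by
  intro i
  induction i with
  | zero => exact h0
  | succ i ih =>
    rcases hstep i with ⟨a, b, hne, hna, hiff⟩ | ⟨a, b, hba, hiff⟩ | hsub
    · exact add_edge_acyclic ih hne hna hiff
    · exact add_edge_acyclic ih (fun h => ih a (by rw [h] at hba; exact hba))
        (fun h => ih b (hba.trans h)) hiff
    · intro x hx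
      exact ih x (TransGen.mono hsub x x hx)
end
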